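/- Let X and Y be partially ordered sets and let φ : X → Y be an order embedding. Suppose that for every y ∈ Y there exists a cut U of X with φ^#(U) = {z ∈ Y | z ≤ y}. Then the map A ↦ φ^#(A) is an order isomorphism from the set of cuts of X onto the set of cuts of Y, both ordered by inclusion: it is a bijection between the cuts of X and the cuts of Y, and for all cuts A, B of X one has A ⊆ B if and only if φ^#(A) ⊆ φ^#(B). -/

import Mathlib

/-- `ul A = (A^u)^l`: the lower bounds of the set of upper bounds of `A`. -/
def ul {X : Type*} [PartialOrder X] (A : Set X) : Set X :=
  lowerBounds (upperBounds A)

/-- `A` is a cut if `A^{ul} = A`. -/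
def IsCut {X : Type*} [PartialOrder X] (A : Set X) : Prop :=
  ul A = A

/-- `φ^#(A) = (φ(A))^{ul}`. -/
def sharp {X Y : Type*} [PartialOrder X] [PartialOrder Y] (φ : X → Y) (A : Set X) : Set Y :=
  ul (φ '' A)

/-!
The hypothesis says that every `y ∈ Y` is the join of the `φ`-images below it. Testing
membership in `φ^#(A)` against these principal cuts gives `φ x ∈ φ^#(A) ↔ x ∈ A^{ul}`, so
`F ↦ φ⁻¹(F)` undoes `φ^#` on the cuts of `X`. Conversely a cut `F` of `Y` equals
`φ^#(φ⁻¹(F))`: each `w ∈ F` is a join of `φ`-images lying in the lower set `F`.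
-/

section

variable {X Y : Type*} [PartialOrder X] [PartialOrder Y]

lemma subset_ul (A : Set X) : A ⊆ ul A :=
  subset_lowerBounds_upperBounds A

lemma ul_mono {A B : Set X} (h : A ⊆ B) : ul A ⊆ ul B :=
  lowerBounds_mono_set (upperBounds_mono_set h)

lemma upperBounds_ul (A : Set X) : upperBounds (ul A) = upperBounds A :=
  gc_upperBounds_lowerBounds.l_u_l_eq_l A

lemma isCut_ul (A : Set X) : IsCut (ul A) := by
  rw [IsCut, ul, upperBounds_ul]
  rfl

lemma IsCut.ul_subset {A B : Set X} (hB : IsCut B) (h : A ⊆ B) : ul A ⊆ B :=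
  hB ▸ ul_mono h

lemma IsCut.isLowerSet {A : Set X} (hA : IsCut A) : IsLowerSet A := by
  intro a b hba ha
  rw [← hA] at ha ⊢
  exact fun c hc => hba.trans (ha hc)

lemma isCut_sharp (φ : X → Y) (A : Set X) : IsCut (sharp φ A) :=
  isCut_ul _

lemma sharp_mono (φ : X → Y) {A B : Set X} (h : A ⊆ B) : sharp φ A ⊆ sharp φ B :=
  ul_mono (Set.image_mono h)

lemma mem_ul_of_map_mem_sharp {φ : X → Y} (hφ : ∀ a b : X, φ a ≤ φ b ↔ a ≤ b)
    {A : Set X} {x : X} (hx : φ x ∈ sharp φ A) : x ∈ ul A := fun b hb =>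
  (hφ x b).1 <| hx <| Set.forall_mem_image.2 fun a ha => (hφ a b).2 (hb ha)

lemma sharp_preimage {φ : X → Y} (hdense : ∀ y : Y, ∃ V : Set X, sharp φ V = Set.Iic y)
    {F : Set Y} (hF : IsCut F) : sharp φ (φ ⁻¹' F) = F := by
  refine subset_antisymm (hF.ul_subset (Set.image_preimage_subset φ F)) fun y hy z hz => ?_
  rw [← hF] at hy
  refine hy fun w hw => ?_
  obtain ⟨V, hV⟩ := hdense w
  have hVF : V ⊆ φ ⁻¹' F := fun v hv => by
    have hvw : φ v ∈ Set.Iic w := hV ▸ subset_ul _ ⟨v, hv, rfl⟩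
    exact hF.isLowerSet hvw hw
  have hzV : z ∈ upperBounds (sharp φ V) := by
    rw [sharp, upperBounds_ul]
    exact upperBounds_mono_set (Set.image_mono hVF) hz
  rw [hV] at hzV
  exact hzV le_rfl

lemma preimage_sharp_eq_ul {φ : X → Y} (hφ : ∀ a b : X, φ a ≤ φ b ↔ a ≤ b)
    (hcut : ∀ y : Y, ∃ U : Set X, IsCut U ∧ sharp φ U = Set.Iic y) (A : Set X) :
    φ ⁻¹' sharp φ A = ul A := by
  refine subset_antisymm (fun x => mem_ul_of_map_mem_sharp hφ) fun x hx z hz => ?_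
  obtain ⟨V, hV, hVz⟩ := hcut z
  have hAV : A ⊆ V := fun a ha => by
    have haV : φ a ∈ sharp φ V := hVz ▸ hz ⟨a, ha, rfl⟩
    exact hV ▸ mem_ul_of_map_mem_sharp hφ haV
  have hxV : φ x ∈ sharp φ V := subset_ul _ ⟨x, hV.ul_subset hAV hx, rfl⟩
  rw [hVz] at hxV
  exact hxV

lemma IsCut.preimage_sharp {φ : X → Y} (hφ : ∀ a b : X, φ a ≤ φ b ↔ a ≤ b)
    (hcut : ∀ y : Y, ∃ U : Set X, IsCut U ∧ sharp φ U = Set.Iic y) {A : Set X}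
    (hA : IsCut A) :
    φ ⁻¹' sharp φ A = A :=
  (preimage_sharp_eq_ul hφ hcut A).trans hA

lemma isCut_preimage {φ : X → Y} (hφ : ∀ a b : X, φ a ≤ φ b ↔ a ≤ b)
    (hcut : ∀ y : Y, ∃ U : Set X, IsCut U ∧ sharp φ U = Set.Iic y) {F : Set Y}
    (hF : IsCut F) :
    IsCut (φ ⁻¹' F) := by
  have hdense : ∀ y : Y, ∃ V : Set X, sharp φ V = Set.Iic y :=
    fun y => (hcut y).imp fun _ => And.right
  rw [IsCut, ← preimage_sharp_eq_ul hφ hcut, sharp_preimage hdense hF]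

lemma sharp_subset_sharp_iff {φ : X → Y} (hφ : ∀ a b : X, φ a ≤ φ b ↔ a ≤ b)
    (hcut : ∀ y : Y, ∃ U : Set X, IsCut U ∧ sharp φ U = Set.Iic y) {A B : Set X}
    (hA : IsCut A) (hB : IsCut B) :
    sharp φ A ⊆ sharp φ B ↔ A ⊆ B := by
  refine ⟨fun h => ?_, sharp_mono φ⟩
  rw [← hA.preimage_sharp hφ hcut, ← hB.preimage_sharp hφ hcut]
  exact Set.preimage_mono h

end

theorem stmt12 {X Y : Type*} [PartialOrder X] [PartialOrder Y] (φ : X → Y)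
    (hφ : ∀ a b : X, φ a ≤ φ b ↔ a ≤ b)
    (hsurj : ∀ y : Y, ∃ U : Set X, IsCut U ∧ sharp φ U = {z : Y | z ≤ y}) :
    Set.BijOn (sharp φ) {A : Set X | IsCut A} {F : Set Y | IsCut F} ∧
      ∀ A B : Set X, IsCut A → IsCut B → (A ⊆ B ↔ sharp φ A ⊆ sharp φ B) := by
  have hdense : ∀ y : Y, ∃ V : Set X, sharp φ V = Set.Iic y :=
    fun y => (hsurj y).imp fun _ => And.right
  have hinv : Set.InvOn (Set.preimage φ) (sharp φ) {A : Set X | IsCut A} {F : Set Y | IsCut F} :=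
    ⟨fun _ hA => IsCut.preimage_sharp hφ hsurj hA, fun _ hF => sharp_preimage hdense hF⟩
  refine ⟨hinv.bijOn (fun A _ => isCut_sharp φ A) fun _ hF => isCut_preimage hφ hsurj hF, ?_⟩
  exact fun A B hA hB => (sharp_subset_sharp_iff hφ hsurj hA hB).symm
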